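/- arXiv:1708.05855 — 3 statements merged into one kernel-verified Lean document; each statement's English description precedes it below -/
import Mathlib

section
/- Let z be a point of the open unit disk and let θ, θ′ ∈ ℝ with 0 < θ′ − θ < 2π. Let α ∈ (0, 2π) and ρ > 0 be the unique numbers such that e^{iθ′} − z = ρ·e^{iα}·(e^{iθ} − z). Then ∫_θ^{θ′} P(z,t) dt = (2α − (θ′ − θ))/(2π). -/
/-!
For `‖z‖ < 1` the point `1 - z e^{-it}` stays in the right half-plane, so
`A(t) = t + arg (1 - z e^{-it})` is a smooth branch of `arg (e^{it} - z)`. Its derivative is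
`Re (1 - z e^{-it})⁻¹ = Re (e^{it} / (e^{it} - z)) > 0`, and `2 A' - 1 = 2π P(z, ·)`, so
`∫_θ^{θ′} P(z,t) dt = (2 (A θ′ - A θ) - (θ′ - θ)) / (2π)`. Since `A` is increasing with
`A (t + 2π) = A t + 2π`, the difference `A θ′ - A θ` lies in `(0, 2π)`; it is congruent to `α`
modulo `2π` by the defining relation of `α`, hence equals `α`.
-/

/-- The Poisson kernel of the unit disk:
`P(z,θ) = (1/(2π)) · (1 − |z|²)/|z − e^{iθ}|²`. -/
noncomputable def poisson (z : ℂ) (θ : ℝ) : ℝ :=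
  (1 / (2 * Real.pi)) * (1 - ‖z‖ ^ 2) /
    ‖z - Complex.exp (θ * Complex.I)‖ ^ 2

open Complex Set

noncomputable def circleArgLift (z : ℂ) (t : ℝ) : ℝ := t + arg (1 - z * exp (-(t * I)))

section

variable {z : ℂ}

lemma norm_mul_exp_neg_ofReal_mul_I (z : ℂ) (t : ℝ) : ‖z * exp (-(t * I))‖ = ‖z‖ := by
  rw [norm_mul, ← neg_mul, ← ofReal_neg, norm_exp_ofReal_mul_I, mul_one]

lemma re_one_sub_mul_exp_pos (hz : ‖z‖ < 1) (t : ℝ) : 0 < (1 - z * exp (-(t * I))).re := by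
  have h := (re_le_norm (z * exp (-(t * I)))).trans_lt
    ((norm_mul_exp_neg_ofReal_mul_I z t).trans_lt hz)
  rw [sub_re, one_re]
  linarith

lemma one_sub_mul_exp_ne_zero (hz : ‖z‖ < 1) (t : ℝ) : 1 - z * exp (-(t * I)) ≠ 0 := by
  intro h
  simpa [h] using re_one_sub_mul_exp_pos hz t

lemma exp_mul_I_sub_eq (z : ℂ) (t : ℝ) :
    exp (t * I) - z = exp (t * I) * (1 - z * exp (-(t * I))) := by
  rw [mul_sub, mul_one, mul_left_comm, ← exp_add, add_neg_cancel, exp_zero, mul_one]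

lemma norm_exp_mul_I_sub (z : ℂ) (t : ℝ) :
    ‖exp (t * I) - z‖ = ‖1 - z * exp (-(t * I))‖ := by
  rw [exp_mul_I_sub_eq, norm_mul, norm_exp_ofReal_mul_I, one_mul]

lemma two_mul_re_inv_one_sub_sub_one {u : ℂ} (hu : u ≠ 1) :
    2 * (1 - u)⁻¹.re - 1 = (1 - ‖u‖ ^ 2) / ‖1 - u‖ ^ 2 := by
  have h : normSq (1 - u) ≠ 0 := normSq_eq_zero.not.2 (sub_ne_zero.2 hu.symm)
  rw [inv_re, ← normSq_eq_norm_sq, ← normSq_eq_norm_sq]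
  field_simp
  simp only [normSq_apply, sub_re, sub_im, one_re, one_im]
  ring

lemma poisson_eq_re_inv (hz : ‖z‖ < 1) (t : ℝ) :
    poisson z t = (2 * (1 - z * exp (-(t * I)))⁻¹.re - 1) / (2 * Real.pi) := by
  rw [two_mul_re_inv_one_sub_sub_one (sub_ne_zero.1 (one_sub_mul_exp_ne_zero hz t)).symm,
    poisson, norm_sub_rev, norm_exp_mul_I_sub, norm_mul_exp_neg_ofReal_mul_I]
  ring

lemma hasDerivAt_circleArgLift (hz : ‖z‖ < 1) (t : ℝ) :
    HasDerivAt (circleArgLift z) (1 - z * exp (-(t * I)))⁻¹.re t := by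
  have hw : HasDerivAt (fun s : ℝ => 1 - z * exp (-(s * I)))
      (I * (1 - (1 - z * exp (-(t * I))))) t := by
    refine ((((hasDerivAt_id t).ofReal_comp.mul_const I).neg.cexp.const_mul z).const_sub 1
      ).congr_deriv ?_
    simp only [id, Pi.neg_apply, ofReal_one]
    ring
  have hlog := hw.clog_real (Or.inl (re_one_sub_mul_exp_pos hz t))
  have harg : circleArgLift z = fun s : ℝ => s + (log (1 - z * exp (-(s * I)))).im := by
    funext s
    rw [circleArgLift, log_im]
  rw [harg]
  refine ((hasDerivAt_id t).add (imCLM.hasFDerivAt.comp_hasDerivAt t hlog)).congr_deriv ?_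
  set w := 1 - z * exp (-(t * I))
  have : I * (1 - w) / w = I * (w⁻¹ - 1) := by
    rw [mul_div_assoc, sub_div, one_div, div_self (one_sub_mul_exp_ne_zero hz t)]
  simp [this]

lemma strictMono_circleArgLift (hz : ‖z‖ < 1) : StrictMono (circleArgLift z) := by
  refine strictMono_of_deriv_pos fun t => ?_
  rw [(hasDerivAt_circleArgLift hz t).deriv, inv_re]
  exact div_pos (re_one_sub_mul_exp_pos hz t) (normSq_pos.2 (one_sub_mul_exp_ne_zero hz t))

lemma circleArgLift_add_two_pi (z : ℂ) (t : ℝ) :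
    circleArgLift z (t + 2 * Real.pi) = circleArgLift z t + 2 * Real.pi := by
  have : exp (-((t + 2 * Real.pi : ℝ) * I)) = exp (-(t * I)) := by
    rw [ofReal_add, add_mul, neg_add, exp_add, ofReal_mul, ofReal_ofNat,
      exp_neg (2 * Real.pi * I), exp_two_pi_mul_I, inv_one, mul_one]
  rw [circleArgLift, circleArgLift, this]
  ring

lemma norm_mul_exp_circleArgLift (z : ℂ) (t : ℝ) :
    ‖exp (t * I) - z‖ * exp (circleArgLift z t * I) = exp (t * I) - z := by
  rw [norm_exp_mul_I_sub, circleArgLift, ofReal_add, add_mul, exp_add, mul_left_comm,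
    norm_mul_exp_arg_mul_I, ← exp_mul_I_sub_eq]

lemma circleArgLift_sub_mem_Ioo (hz : ‖z‖ < 1) {θ θ' : ℝ} (hθ : θ < θ')
    (hθ' : θ' < θ + 2 * Real.pi) :
    circleArgLift z θ' - circleArgLift z θ ∈ Ioo 0 (2 * Real.pi) := by
  have h₁ := strictMono_circleArgLift hz hθ
  have h₂ := strictMono_circleArgLift hz hθ'
  rw [circleArgLift_add_two_pi] at h₂
  constructor <;> linarith

lemma integral_poisson (hz : ‖z‖ < 1) (θ θ' : ℝ) :
    ∫ t in θ..θ', poisson z t =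
      (2 * (circleArgLift z θ' - circleArgLift z θ) - (θ' - θ)) / (2 * Real.pi) := by
  have hderiv (t : ℝ) :
      HasDerivAt (fun s => (2 * circleArgLift z s - s) / (2 * Real.pi)) (poisson z t) t := by
    rw [poisson_eq_re_inv hz]
    exact (((hasDerivAt_circleArgLift hz t).const_mul 2).sub (hasDerivAt_id t)).div_const _
  have hcont : Continuous (poisson z) := by
    rw [funext (poisson_eq_re_inv hz)]
    fun_prop (disch := exact fun t => normSq_eq_zero.not.2 (one_sub_mul_exp_ne_zero hz t))
  rw [intervalIntegral.integral_eq_sub_of_hasDerivAt (fun t _ => hderiv t)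
    (hcont.intervalIntegrable θ θ')]
  ring

lemma exp_circleArgLift_sub {θ θ' α ρ : ℝ} (hz : ‖z‖ < 1) (hρ : 0 < ρ)
    (hrel : exp (θ' * I) - z = ρ * exp (α * I) * (exp (θ * I) - z)) :
    exp ((circleArgLift z θ' - circleArgLift z θ : ℝ) * I) = exp (α * I) := by
  have hb : exp (θ * I) - z ≠ 0 := by
    rw [exp_mul_I_sub_eq]
    exact mul_ne_zero (exp_ne_zero _) (one_sub_mul_exp_ne_zero hz θ)
  have hnorm : ‖exp (θ' * I) - z‖ = ρ * ‖exp (θ * I) - z‖ := by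
    rw [hrel, norm_mul, norm_mul, norm_real, norm_exp_ofReal_mul_I, Real.norm_of_nonneg hρ.le,
      mul_one]
  have hρb : ((ρ * ‖exp (θ * I) - z‖ : ℝ) : ℂ) ≠ 0 :=
    ofReal_ne_zero.2 (mul_ne_zero hρ.ne' (norm_ne_zero_iff.2 hb))
  rw [ofReal_sub, sub_mul, exp_sub, div_eq_iff (exp_ne_zero _)]
  refine mul_left_cancel₀ hρb ?_
  calc ((ρ * ‖exp (θ * I) - z‖ : ℝ) : ℂ) * exp (circleArgLift z θ' * I)
      = exp (θ' * I) - z := by rw [← hnorm, norm_mul_exp_circleArgLift]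
    _ = ρ * exp (α * I) * (‖exp (θ * I) - z‖ * exp (circleArgLift z θ * I)) := by
      rw [hrel, norm_mul_exp_circleArgLift]
    _ = _ := by push_cast; ring

end

/-- **Harmonic measure via the inscribed angle.**  Let `z` be in the open unit disk,
`θ, θ′ ∈ ℝ` with `0 < θ′ − θ < 2π`, and let `α ∈ (0,2π)`, `ρ > 0` be such that
`e^{iθ′} − z = ρ·e^{iα}·(e^{iθ} − z)` (so `α` is the counterclockwise angle at `z`
between the rays toward `e^{iθ}` and `e^{iθ′}`).  Then
`∫_θ^{θ′} P(z,t) dt = (2α − (θ′ − θ))/(2π)`. -/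
theorem harmonic_measure_angle
    (z : ℂ) (hz : ‖z‖ < 1) (θ θ' : ℝ)
    (hθ : 0 < θ' - θ) (hθ2 : θ' - θ < 2 * Real.pi)
    (α ρ : ℝ) (hα : α ∈ Set.Ioo 0 (2 * Real.pi)) (hρ : 0 < ρ)
    (hrel : Complex.exp (θ' * Complex.I) - z =
      (ρ : ℂ) * Complex.exp (α * Complex.I) * (Complex.exp (θ * Complex.I) - z)) :
    ∫ t in θ..θ', poisson z t = (2 * α - (θ' - θ)) / (2 * Real.pi) := by
  have hlift : circleArgLift z θ' - circleArgLift z θ = α := by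
    refine Circle.exp_injOn_Ico (sub_zero _).le
      (Ioo_subset_Ico_self (circleArgLift_sub_mem_Ioo hz (by linarith) (by linarith)))
      (Ioo_subset_Ico_self hα) (Subtype.ext ?_)
    simpa only [Circle.coe_exp] using exp_circleArgLift_sub hz hρ hrel
  rw [integral_poisson hz, hlift]
end

section
/- Let −π < θ_1 < θ_2 < ⋯ < θ_n ≤ π with θ_{n+1} := θ_1 + 2π, and fix j ∈ {1,…,n}. Then the reduced coordinate φ_j, as a real-valued function on the open unit disk, is differentiable in the real (Fréchet) sense, and its gradient at every z with |z| < 1 is ∇φ_j(z) = (i/(π·(1 − |z|²)))·(A_z(θ_{j+1}) − A_z(θ_j)). -/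
/-- The antipode of `e^{iθ}` relative to a point `z` of the open unit disk:
`A_z(θ) = −(e^{iθ} − z)·e^{−iθ}/conj(e^{iθ} − z)`; it is the second intersection of the
line through `z` and `e^{iθ}` with the unit circle. -/
noncomputable def antipode (z : ℂ) (θ : ℝ) : ℂ :=
  -(Complex.exp (θ * Complex.I) - z) * Complex.exp (-θ * Complex.I) /
    (starRingEnd ℂ) (Complex.exp (θ * Complex.I) - z)

/-!
The Poisson kernel is `P(z,t) = (1/2π)·Re((e^{it} + z)/(e^{it} - z))`, which is the
`t`-derivative of `Im Ψ(z,t)` for `Ψ(z,s) = i s/(2π) + π⁻¹ log(1 - z e^{-is})`, holomorphic in `z`.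
Hence `φ_j = Im (Ψ(·,θ_{j+1}) - Ψ(·,θ_j))` is the imaginary part of a holomorphic function, and
the gradient of `Im f` is `i·conj f'`. Each endpoint contributes `∂_zΨ(z,s) = -π⁻¹ (e^{is} - z)⁻¹`,
and `A_z(s) = z - (1 - |z|²)·conj (e^{is} - z)⁻¹` turns the result into the antipode formula.
-/

open Complex ComplexConjugate Real Topology

lemma exp_ofReal_mul_I_ne_of_norm_lt_one {z : ℂ} (hz : ‖z‖ < 1) (s : ℝ) : exp (s * I) ≠ z := by
  rintro rfl
  simp at hz

lemma one_sub_sq_norm_ne_zero {z : ℂ} (hz : ‖z‖ < 1) : 1 - (‖z‖ : ℂ) ^ 2 ≠ 0 := by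
  exact_mod_cast (sub_pos.mpr (pow_lt_one₀ (norm_nonneg z) hz two_ne_zero)).ne'

lemma poisson_eq_re_div (z : ℂ) (t : ℝ) :
    poisson z t = (2 * π)⁻¹ * ((exp (t * I) + z) / (exp (t * I) - z)).re := by
  have h := congrFun (poissonKernel_eq_re_herglotzRieszKernel (c := 0) (w := z)) (exp (t * I))
  simp only [poissonKernel, herglotzRieszKernel, sub_zero, Function.comp_apply,
    norm_exp_ofReal_mul_I] at h
  rw [poisson, ← h, norm_sub_rev]
  ring

lemma continuous_poisson {z : ℂ} (hz : ‖z‖ < 1) : Continuous (poisson z) :=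
  Continuous.div (by fun_prop) (by fun_prop) fun t => pow_ne_zero 2 <|
    norm_ne_zero_iff.mpr (sub_ne_zero.mpr (exp_ofReal_mul_I_ne_of_norm_lt_one hz t).symm)

lemma one_sub_mul_exp_mem_slitPlane {z : ℂ} (hz : ‖z‖ < 1) (s : ℝ) :
    1 - z * exp (-(s * I)) ∈ slitPlane := by
  rw [sub_eq_add_neg]
  refine mem_slitPlane_of_norm_lt_one ?_
  rwa [norm_neg, norm_mul, Complex.exp_neg, norm_inv, norm_exp_ofReal_mul_I, inv_one, mul_one]

/-- Since `1 - z e^{-is}` stays in the right half-plane for `‖z‖ < 1`, `log` never meets its branch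
cut, so the imaginary part is a primitive of `P(z, ·)` on all of `ℝ`. -/
noncomputable def poissonPrimitive (z : ℂ) (s : ℝ) : ℂ :=
  (s / (2 * π) : ℝ) * I + (π⁻¹ : ℝ) * log (1 - z * exp (-(s * I)))

lemma hasDerivAt_poissonPrimitive_im {z : ℂ} (hz : ‖z‖ < 1) (t : ℝ) :
    HasDerivAt (fun s => (poissonPrimitive z s).im) (poisson z t) t := by
  have hs : HasDerivAt (fun s : ℝ => (s : ℂ)) 1 t := (hasDerivAt_id t).ofReal_comp
  have hlin : HasDerivAt (fun s : ℝ => ((s / (2 * π) : ℝ) : ℂ) * I) ((2 * π)⁻¹ * I : ℂ) t := by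
    simpa using ((hasDerivAt_id t).div_const (2 * π)).ofReal_comp.mul_const I
  have hexp : HasDerivAt (fun s : ℝ => 1 - z * exp (-(s * I))) (I * (z * exp (-(t * I)))) t :=
    ((((hs.mul_const I).fun_neg.cexp).const_mul z).const_sub 1).congr_deriv (by ring)
  have hΨ : HasDerivAt (poissonPrimitive z) _ t :=
    hlin.add ((hexp.clog_real (one_sub_mul_exp_mem_slitPlane hz t)).const_mul ((π⁻¹ : ℝ) : ℂ))
  refine (imCLM.hasFDerivAt.comp_hasDerivAt t hΨ).congr_deriv ?_
  have hne : exp (t * I) - z ≠ 0 := sub_ne_zero.mpr (exp_ofReal_mul_I_ne_of_norm_lt_one hz t)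
  have hπ : (π : ℂ) ≠ 0 := ofReal_ne_zero.mpr pi_ne_zero
  have hderiv : ((2 * π)⁻¹ : ℝ) * I +
        (π⁻¹ : ℝ) * (I * (z * exp (-(t * I))) / (1 - z * exp (-(t * I)))) =
      ((2 * π)⁻¹ : ℝ) * (I * ((exp (t * I) + z) / (exp (t * I) - z))) := by
    have he0 : exp (t * I) ≠ 0 := exp_ne_zero _
    rw [Complex.exp_neg]
    generalize exp (t * I) = e at he0 hne ⊢
    push_cast
    field_simp
    ring
  rw [hderiv, poisson_eq_re_div, imCLM_apply, im_ofReal_mul, I_mul_im]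

lemma integral_poisson_s8 {z : ℂ} (hz : ‖z‖ < 1) (a b : ℝ) :
    ∫ t in a..b, poisson z t = (poissonPrimitive z b - poissonPrimitive z a).im := by
  rw [sub_im]
  exact intervalIntegral.integral_eq_sub_of_hasDerivAt
    (fun t _ => hasDerivAt_poissonPrimitive_im hz t)
    ((continuous_poisson hz).intervalIntegrable a b)

lemma hasDerivAt_poissonPrimitive {z : ℂ} (hz : ‖z‖ < 1) (s : ℝ) :
    HasDerivAt (fun w => poissonPrimitive w s) (-((π⁻¹ : ℝ) * (exp (s * I) - z)⁻¹)) z := by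
  have hlin : HasDerivAt (fun w => 1 - w * exp (-(s * I))) (-exp (-(s * I))) z := by
    simpa using ((hasDerivAt_id z).mul_const (exp (-(s * I)))).const_sub 1
  refine (((hlin.clog (one_sub_mul_exp_mem_slitPlane hz s)).const_mul ((π⁻¹ : ℝ) : ℂ)).const_add
    (((s / (2 * π) : ℝ) : ℂ) * I)).congr_deriv ?_
  have hne : exp (s * I) - z ≠ 0 := sub_ne_zero.mpr (exp_ofReal_mul_I_ne_of_norm_lt_one hz s)
  rw [Complex.exp_neg]
  field_simp

lemma HasDerivAt.hasGradientAt_im {f : ℂ → ℂ} {f' z : ℂ} (hf : HasDerivAt f f' z) :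
    HasGradientAt (fun w => (f w).im) (I * conj f') z := by
  rw [hasGradientAt_iff_hasFDerivAt]
  refine (imCLM.hasFDerivAt.comp z (hf.hasFDerivAt.restrictScalars ℝ)).congr_fderiv ?_
  ext h
  simp [Complex.inner, mul_comm]

lemma antipode_eq {z : ℂ} (hz : ‖z‖ < 1) (s : ℝ) :
    antipode z s = z - (1 - (‖z‖ : ℂ) ^ 2) * conj (exp (s * I) - z)⁻¹ := by
  have hconj : exp (-s * I) = conj (exp (s * I)) := by rw [← exp_conj]; simp
  have hz2 : (‖z‖ : ℂ) ^ 2 = z * conj z := by rw [mul_conj, normSq_eq_norm_sq]; push_cast; rfl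
  have he : conj (exp (s * I)) * exp (s * I) = 1 := by
    rw [conj_mul', norm_exp_ofReal_mul_I]; simp
  have hne : exp (s * I) - z ≠ 0 := sub_ne_zero.mpr (exp_ofReal_mul_I_ne_of_norm_lt_one hz s)
  have hne' : conj (exp (s * I)) - conj z ≠ 0 := by rw [← map_sub]; exact (map_ne_zero _).mpr hne
  rw [antipode, hconj, hz2, map_inv₀, map_sub]
  generalize exp (s * I) = e at he hne hne' ⊢
  field_simp
  linear_combination -he

lemma hasGradientAt_integral_poisson {z : ℂ} (hz : ‖z‖ < 1) (a b : ℝ) :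
    HasGradientAt (fun w => ∫ t in a..b, poisson w t)
      (I / ((π : ℂ) * (1 - (‖z‖ : ℂ) ^ 2)) * (antipode z b - antipode z a)) z := by
  have hΦ :=
    ((hasDerivAt_poissonPrimitive hz b).sub (hasDerivAt_poissonPrimitive hz a)).hasGradientAt_im
  have hdisk : ∀ᶠ w in 𝓝 z, ‖w‖ < 1 :=
    (isOpen_lt continuous_norm continuous_const).eventually_mem hz
  convert hΦ.congr_of_eventuallyEq (hdisk.mono fun w hw => integral_poisson_s8 hw a b) using 1
  have hπ : (π : ℂ) ≠ 0 := ofReal_ne_zero.mpr pi_ne_zero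
  have hs := one_sub_sq_norm_ne_zero hz
  rw [antipode_eq hz, antipode_eq hz]
  simp only [map_sub, map_neg, map_mul, conj_ofReal, ofReal_inv, map_inv₀]
  field_simp
  ring

theorem grad_reduced_coordinate_general
    (θ : ℕ → ℝ)
    (j : ℕ)
    (φ : ℂ → ℝ)
    (hφ : ∀ z, φ z = ∫ t in (θ j)..(θ (j + 1)), poisson z t) :
    ∀ z : ℂ, ‖z‖ < 1 →
      ∃ L : ℂ →L[ℝ] ℝ, HasFDerivAt φ L z ∧
        ∀ h : ℂ, L h =
          ((starRingEnd ℂ)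
            (Complex.I / ((Real.pi : ℂ) * (1 - (‖z‖ : ℂ) ^ 2)) *
              (antipode z (θ (j + 1)) - antipode z (θ j))) * h).re := by
  intro z hz
  obtain rfl : φ = _ := funext hφ
  refine ⟨_, hasGradientAt_integral_poisson hz (θ j) (θ (j + 1)), fun h => ?_⟩
  rw [InnerProductSpace.toDual_apply_apply, Complex.inner, mul_comm]

/-- **Gradient of a reduced coordinate.**  For a partition `−π < θ₁ < ⋯ < θ_n ≤ π` of the
circle with `θ_{n+1} := θ₁ + 2π` and `j ∈ {1,…,n}`, the reduced coordinate
`φ_j(z) = ∫_{θ_j}^{θ_{j+1}} P(z,θ)dθ` is Fréchet differentiable on the open unit disk with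
gradient `∇φ_j(z) = (i/(π(1 − |z|²)))·(A_z(θ_{j+1}) − A_z(θ_j))`. -/
theorem grad_reduced_coordinate
    (n : ℕ) (θ : ℕ → ℝ)
    (hθ1 : -Real.pi < θ 1) (hθn : θ n ≤ Real.pi)
    (hmono : ∀ k, 1 ≤ k → k < n → θ k < θ (k + 1))
    (hper : θ (n + 1) = θ 1 + 2 * Real.pi)
    (j : ℕ) (hj : j ∈ Finset.Icc 1 n)
    (φ : ℂ → ℝ)
    (hφ : ∀ z, φ z = ∫ t in (θ j)..(θ (j + 1)), poisson z t) :
    ∀ z : ℂ, ‖z‖ < 1 →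
      ∃ L : ℂ →L[ℝ] ℝ, HasFDerivAt φ L z ∧
        ∀ h : ℂ, L h =
          ((starRingEnd ℂ)
            (Complex.I / ((Real.pi : ℂ) * (1 - (‖z‖ : ℂ) ^ 2)) *
              (antipode z (θ (j + 1)) - antipode z (θ j))) * h).re :=
  grad_reduced_coordinate_general θ j φ hφ
end

section
/- Let f : (0,∞) → ℝ be continuous and strictly convex with f(1) = 0, and define its dual f*(x) = x·f(1/x). For z, y in the open unit disk define d_f(z,y) = ∫_{−π}^{π} P(z,t)·f(P(y,t)/P(z,t)) dt. Then for all z, y in the open unit disk, d_f(z,y) = d_{f*}(z,y) and d_f(z,y) = d_f(y,z); that is, f and f* generate identical divergence distances and the f-divergence distance is symmetric. -/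
/-- The `f`-divergence distance between two points of the open unit disk:
`d_f(z,y) = ∫_{−π}^{π} P(z,t)·f(P(y,t)/P(z,t)) dt`. -/
noncomputable def divDist (f : ℝ → ℝ) (z y : ℂ) : ℝ :=
  ∫ t in (-Real.pi)..Real.pi, poisson z t * f (poisson y t / poisson z t)

open Complex ComplexConjugate MeasureTheory
open scoped Real

theorem Function.Periodic.intervalIntegral_comp_smul_deriv {E : Type*} [NormedAddCommGroup E]
    [NormedSpace ℝ E] {g : ℝ → E} {T : ℝ} (hg : Function.Periodic g T) (hT : 0 ≤ T)
    {φ φ' : ℝ → ℝ} (hφ : ∀ x, HasDerivAt φ (φ' x) x) (hφ' : ∀ x, 0 ≤ φ' x) {a : ℝ}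
    (hφT : φ (a + T) = φ a + T) :
    ∫ x in a..a + T, φ' x • g (φ x) = ∫ x in a..a + T, g x := by
  have hφc : Continuous φ := continuous_iff_continuousAt.2 fun x => (hφ x).continuousAt
  rw [intervalIntegral.integral_of_le (by linarith), ← integral_Icc_eq_integral_Ioc,
    integral_Icc_deriv_smul_of_deriv_nonneg hφc.continuousOn (fun x _ => hφ x)
      (fun x _ => hφ' x) (by linarith), hφT, integral_Icc_eq_integral_Ioc,
    ← intervalIntegral.integral_of_le (by linarith), hg.intervalIntegral_add_eq]

lemma poisson_pos {z : ℂ} (hz : ‖z‖ < 1) (t : ℝ) : 0 < poisson z t := by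
  have hzt : z - exp (t * I) ≠ 0 := by
    rw [sub_ne_zero]
    rintro rfl
    rw [norm_exp_ofReal_mul_I] at hz
    exact lt_irrefl 1 hz
  have := norm_pos_iff.2 hzt
  have : 0 < 1 - ‖z‖ ^ 2 := by nlinarith [norm_nonneg z]
  unfold poisson
  positivity

lemma poisson_periodic (z : ℂ) : Function.Periodic (poisson z) (2 * π) := by
  intro t
  rw [poisson, poisson, ofReal_add, add_mul, exp_add, ofReal_mul, ofReal_ofNat,
    exp_two_pi_mul_I, mul_one]

noncomputable def mobius (a z : ℂ) : ℂ := (a - z) / (1 - conj a * z)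

lemma norm_one_sub_conj_mul_sq_sub_norm_sub_sq (a z : ℂ) :
    ‖1 - conj a * z‖ ^ 2 - ‖a - z‖ ^ 2 = (1 - ‖a‖ ^ 2) * (1 - ‖z‖ ^ 2) := by
  simp only [Complex.sq_norm]
  apply ofReal_injective
  push_cast
  simp only [← mul_conj, map_sub, map_one, map_mul, conj_conj]
  ring

lemma one_sub_conj_mul_ne_zero {a z : ℂ} (ha : ‖a‖ < 1) (hz : ‖z‖ ≤ 1) :
    1 - conj a * z ≠ 0 := by
  rw [sub_ne_zero]
  intro h
  have : ‖conj a * z‖ < 1 := by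
    rw [norm_mul, norm_conj]
    nlinarith [norm_nonneg a, norm_nonneg z]
  rw [← h, norm_one] at this
  exact lt_irrefl 1 this

lemma one_sub_norm_mobius_sq {a z : ℂ} (ha : ‖a‖ < 1) (hz : ‖z‖ ≤ 1) :
    1 - ‖mobius a z‖ ^ 2 = (1 - ‖a‖ ^ 2) * (1 - ‖z‖ ^ 2) / ‖1 - conj a * z‖ ^ 2 := by
  have h := norm_ne_zero_iff.2 (one_sub_conj_mul_ne_zero ha hz)
  rw [mobius, norm_div, div_pow, eq_div_iff (by positivity),
    ← norm_one_sub_conj_mul_sq_sub_norm_sub_sq, one_sub_mul, div_mul_cancel₀ _ (by positivity)]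

lemma norm_mobius_lt_one {a z : ℂ} (ha : ‖a‖ < 1) (hz : ‖z‖ < 1) : ‖mobius a z‖ < 1 := by
  have hv := norm_pos_iff.2 (one_sub_conj_mul_ne_zero ha hz.le)
  have : 0 < 1 - ‖mobius a z‖ ^ 2 := by
    rw [one_sub_norm_mobius_sq ha hz.le]
    have : 0 < 1 - ‖a‖ ^ 2 := by nlinarith [norm_nonneg a]
    have : 0 < 1 - ‖z‖ ^ 2 := by nlinarith [norm_nonneg z]
    positivity
  nlinarith [norm_nonneg (mobius a z)]

lemma norm_lt_one_of_sub_eq_mul {a z y : ℂ} (hz : ‖z‖ < 1) (hy : ‖y‖ < 1)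
    (h : a - z = y * (1 - conj a * z)) : ‖a‖ < 1 := by
  have hv : 1 - conj a * z ≠ 0 := by
    intro hv
    have haz : a = z := sub_eq_zero.1 (by simpa [hv] using h)
    rw [haz, sub_eq_zero, conj_mul'] at hv
    norm_cast at hv
    nlinarith [norm_nonneg z]
  have hnorm := norm_one_sub_conj_mul_sq_sub_norm_sub_sq a z
  rw [h, norm_mul, mul_pow] at hnorm
  have hprod : 0 < (1 - ‖a‖ ^ 2) * (1 - ‖z‖ ^ 2) := by
    have hv' := norm_pos_iff.2 hv
    have hy2 : ‖y‖ ^ 2 < 1 := by nlinarith [norm_nonneg y]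
    rw [← hnorm]
    nlinarith [mul_pos (pow_pos hv' 2) (sub_pos.2 hy2)]
  have := (pos_iff_pos_of_mul_pos hprod).2 (by nlinarith [norm_nonneg z])
  nlinarith [norm_nonneg a]

lemma exists_mobius_swap {z y : ℂ} (hz : ‖z‖ < 1) (hy : ‖y‖ < 1) :
    ∃ a : ℂ, ‖a‖ < 1 ∧ mobius a z = y ∧ mobius a y = z := by
  have hz2 : ‖z‖ ^ 2 < 1 := by nlinarith [norm_nonneg z]
  have hy2 : ‖y‖ ^ 2 < 1 := by nlinarith [norm_nonneg y]
  have hD : (1 - ‖y‖ ^ 2 * ‖z‖ ^ 2 : ℂ) ≠ 0 := by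
    norm_cast
    nlinarith [sq_nonneg ‖y‖, sq_nonneg ‖z‖]
  set a : ℂ := (y * (1 - ‖z‖ ^ 2) + z * (1 - ‖y‖ ^ 2)) / (1 - ‖y‖ ^ 2 * ‖z‖ ^ 2)
  have hA : a * (1 - ‖y‖ ^ 2 * ‖z‖ ^ 2) = y * (1 - ‖z‖ ^ 2) + z * (1 - ‖y‖ ^ 2) :=
    div_mul_cancel₀ _ hD
  have hA' : conj a * (1 - ‖y‖ ^ 2 * ‖z‖ ^ 2) =
      conj y * (1 - ‖z‖ ^ 2) + conj z * (1 - ‖y‖ ^ 2) := by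
    simpa [← ofReal_pow, conj_ofReal] using congrArg conj hA
  -- `a` solves `a + ā y z = y + z`, the condition for `φ_a` to exchange `z` and `y`
  have hrel : a + conj a * y * z = y + z := by
    apply mul_right_cancel₀ hD
    linear_combination hA + y * z * hA' + z * (1 - (‖z‖ : ℂ) ^ 2) * mul_conj' y +
      y * (1 - (‖y‖ : ℂ) ^ 2) * mul_conj' z
  have hmap_z : a - z = y * (1 - conj a * z) := by linear_combination hrel
  have hmap_y : a - y = z * (1 - conj a * y) := by linear_combination hrel
  have ha := norm_lt_one_of_sub_eq_mul hz hy hmap_z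
  refine ⟨a, ha, ?_, ?_⟩
  · rw [mobius, hmap_z, mul_div_cancel_right₀ _ (one_sub_conj_mul_ne_zero ha hz.le)]
  · rw [mobius, hmap_y, mul_div_cancel_right₀ _ (one_sub_conj_mul_ne_zero ha hy.le)]

-- For `|w| = 1` and `u = 1 - ā w` we have `φ_a(w) = -w · ū / u`, of argument `arg w + π - 2 arg u`;
-- `Re u > 0` keeps `arg u` continuous.
noncomputable def boundaryLift (a : ℂ) (s : ℝ) : ℝ :=
  s + π - 2 * arg (1 - conj a * exp (s * I))

noncomputable def boundaryLiftDeriv (a : ℂ) (s : ℝ) : ℝ :=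
  (1 - ‖a‖ ^ 2) / ‖1 - conj a * exp (s * I)‖ ^ 2

lemma exp_neg_two_arg_mul_I {u : ℂ} (hu : u ≠ 0) : exp (-(2 * arg u) * I) = conj u / u := by
  have hlog : conj (log u) = log u - 2 * arg u * I := by
    apply Complex.ext
    · simp
    · simp [log_im]; ring
  conv_rhs => rw [← exp_log hu, ← exp_conj, hlog, ← exp_sub]
  ring_nf

lemma exp_boundaryLift_mul_I {a : ℂ} (ha : ‖a‖ < 1) (s : ℝ) :
    exp (boundaryLift a s * I) = mobius a (exp (s * I)) := by
  set w := exp (s * I)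
  have hw : ‖w‖ = 1 := norm_exp_ofReal_mul_I s
  have hu := one_sub_conj_mul_ne_zero ha hw.le
  have hsplit : (boundaryLift a s : ℂ) * I =
      s * I + π * I + -(2 * arg (1 - conj a * w)) * I := by
    simp only [boundaryLift]; push_cast; ring
  rw [hsplit, exp_add, exp_add, exp_pi_mul_I, exp_neg_two_arg_mul_I hu, mobius,
    map_sub, map_one, map_mul, conj_conj]
  have hww : w * conj w = 1 := by rw [mul_conj', hw]; simp
  field_simp
  linear_combination a * hww

lemma boundaryLift_add_two_pi (a : ℂ) (s : ℝ) :
    boundaryLift a (s + 2 * π) = boundaryLift a s + 2 * π := by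
  have : exp (↑(s + 2 * π) * I) = exp (s * I) := by
    push_cast
    rw [add_mul, exp_add, exp_two_pi_mul_I, mul_one]
  simp only [boundaryLift, this]
  ring

lemma one_add_two_mul_re_div_one_sub {ζ : ℂ} (hζ : ζ ≠ 1) :
    1 + 2 * (ζ / (1 - ζ)).re = (1 - ‖ζ‖ ^ 2) / ‖1 - ζ‖ ^ 2 := by
  have hD : normSq (1 - ζ) ≠ 0 := (normSq_pos.2 (sub_ne_zero.2 (Ne.symm hζ))).ne'
  rw [Complex.sq_norm, Complex.sq_norm, div_re]
  field_simp
  simp only [normSq_apply, sub_re, sub_im, one_re, one_im]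
  ring

lemma hasDerivAt_boundaryLift {a : ℂ} (ha : ‖a‖ < 1) (s : ℝ) :
    HasDerivAt (boundaryLift a) (boundaryLiftDeriv a s) s := by
  set ζ := conj a * exp (s * I)
  have hζ : ‖ζ‖ = ‖a‖ := by simp [ζ, norm_exp_ofReal_mul_I]
  have hexp : HasDerivAt (fun t : ℝ => exp (t * I)) (exp (s * I) * I) s := by
    simpa using ((hasDerivAt_id (s : ℂ)).mul_const I).cexp.comp_ofReal
  have hu : HasDerivAt (fun t : ℝ => 1 - conj a * exp (t * I)) (-(ζ * I)) s := by
    simpa [ζ, mul_assoc] using (hexp.const_mul (conj a)).const_sub 1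
  have hslit : 1 - ζ ∈ slitPlane := by
    simpa [sub_eq_add_neg] using mem_slitPlane_of_norm_lt_one (z := -ζ) (by rwa [norm_neg, hζ])
  have harg := imCLM.hasFDerivAt.comp_hasDerivAt s (hu.clog_real hslit)
  simp only [Function.comp_def, imCLM_apply, log_im] at harg
  refine (((hasDerivAt_id s).add_const π).sub (harg.const_mul 2)).congr_deriv ?_
  have hζ1 : ζ ≠ 1 := fun h => by rw [h, norm_one] at hζ; linarith
  have him : (-(ζ * I) / (1 - ζ)).im = -(ζ / (1 - ζ)).re := by
    rw [neg_div, mul_div_right_comm, neg_im, mul_im, I_re, I_im]; ring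
  rw [boundaryLiftDeriv, him, ← hζ, ← one_add_two_mul_re_div_one_sub hζ1]
  ring

lemma boundaryLiftDeriv_pos {a : ℂ} (ha : ‖a‖ < 1) (s : ℝ) : 0 < boundaryLiftDeriv a s := by
  have := norm_pos_iff.2 (one_sub_conj_mul_ne_zero ha (norm_exp_ofReal_mul_I s).le)
  have : 0 < 1 - ‖a‖ ^ 2 := by nlinarith [norm_nonneg a]
  unfold boundaryLiftDeriv
  positivity

lemma boundaryLiftDeriv_mul_poisson {a z : ℂ} (ha : ‖a‖ < 1) (hz : ‖z‖ < 1) (s : ℝ) :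
    boundaryLiftDeriv a s * poisson z (boundaryLift a s) = poisson (mobius a z) s := by
  set w := exp (s * I) with hw_def
  have hw : ‖w‖ = 1 := norm_exp_ofReal_mul_I s
  have hu := one_sub_conj_mul_ne_zero ha hw.le
  have hv := one_sub_conj_mul_ne_zero ha hz.le
  have hwb : w - mobius a z ≠ 0 := by
    have := norm_mobius_lt_one ha hz
    intro h
    rw [← sub_eq_zero.1 h, hw] at this
    exact lt_irrefl 1 this
  have hsub : z - exp (boundaryLift a s * I) =
      (1 - conj a * z) * (w - mobius a z) / (1 - conj a * w) := by
    rw [exp_boundaryLift_mul_I ha, ← hw_def, mobius, mobius, eq_div_iff hu, sub_mul,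
      div_mul_cancel₀ _ hu, mul_sub (1 - conj a * z), mul_div_cancel₀ _ hv]
    ring
  rw [poisson, poisson, hsub, norm_div, norm_mul, norm_sub_rev (mobius a z), ← hw_def,
    one_sub_norm_mobius_sq ha hz.le, boundaryLiftDeriv, ← hw_def]
  have := norm_pos_iff.2 hu
  have := norm_pos_iff.2 hv
  have := norm_pos_iff.2 hwb
  field_simp

theorem divDist_mobius (f : ℝ → ℝ) {a z y : ℂ} (ha : ‖a‖ < 1) (hz : ‖z‖ < 1) (hy : ‖y‖ < 1) :
    divDist f (mobius a z) (mobius a y) = divDist f z y := by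
  set H : ℝ → ℝ := fun t => poisson z t * f (poisson y t / poisson z t)
  have hH : Function.Periodic H (2 * π) := fun t => by
    simp only [H, poisson_periodic z t, poisson_periodic y t]
  have hsubst := hH.intervalIntegral_comp_smul_deriv (by positivity) (hasDerivAt_boundaryLift ha)
    (fun s => (boundaryLiftDeriv_pos ha s).le) (boundaryLift_add_two_pi a (-π))
  rw [show -π + 2 * π = π by ring] at hsubst
  refine Eq.trans (intervalIntegral.integral_congr fun s _ => ?_) hsubst
  have hd := (boundaryLiftDeriv_pos ha s).ne'
  simp only [H, smul_eq_mul, ← boundaryLiftDeriv_mul_poisson ha hz,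
    ← boundaryLiftDeriv_mul_poisson ha hy, mul_div_mul_left _ _ hd, mul_assoc]

theorem divDist_symm (f : ℝ → ℝ) {z y : ℂ} (hz : ‖z‖ < 1) (hy : ‖y‖ < 1) :
    divDist f z y = divDist f y z := by
  obtain ⟨a, ha, hza, hya⟩ := exists_mobius_swap hz hy
  rw [← divDist_mobius f ha hz hy, hza, hya]

theorem divDist_dual (f : ℝ → ℝ) {z y : ℂ} (hz : ‖z‖ < 1) (hy : ‖y‖ < 1) :
    divDist (fun x => x * f (1 / x)) z y = divDist f y z := by
  refine intervalIntegral.integral_congr fun t _ => ?_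
  have hpz := (poisson_pos hz t).ne'
  have hpy := (poisson_pos hy t).ne'
  simp only [one_div_div]
  field_simp

theorem divDist_dual_and_symm_general
    (f : ℝ → ℝ) :
    ∀ z : ℂ, ‖z‖ < 1 → ∀ y : ℂ, ‖y‖ < 1 →
      divDist f z y = divDist (fun x => x * f (1 / x)) z y ∧
      divDist f z y = divDist f y z := by
  intro z hz y hy
  exact ⟨(divDist_symm f hz hy).trans (divDist_dual f hz hy).symm, divDist_symm f hz hy⟩

/-- **Symmetry and duality of the `f`-divergence distance.**  Let `f` be continuous and
strictly convex on `(0,∞)` with `f(1) = 0`, and let `f*(x) = x·f(1/x)` be its dual.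
Then for all `z, y` in the open unit disk, `d_f(z,y) = d_{f*}(z,y)` and
`d_f(z,y) = d_f(y,z)`. -/
theorem divDist_dual_and_symm
    (f : ℝ → ℝ)
    (hfc : ContinuousOn f (Set.Ioi 0))
    (hconv : StrictConvexOn ℝ (Set.Ioi 0) f)
    (hf1 : f 1 = 0) :
    ∀ z : ℂ, ‖z‖ < 1 → ∀ y : ℂ, ‖y‖ < 1 →
      divDist f z y = divDist (fun x => x * f (1 / x)) z y ∧
      divDist f z y = divDist f y z :=
  divDist_dual_and_symm_general f
end
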